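/- For shared-input composition: (1) H_∞(π, C₁ ∥ C₂) ≤ min{H_∞(π, C₁), H_∞(π, C₂)}, i.e., V(π, C₁ ∥ C₂) ≥ max{V(π,C₁), V(π,C₂)}; (2) consequently I_∞(π, C₁ ∥ C₂) ≥ max{I_∞(π, C₁), I_∞(π, C₂)}. -/
import Mathlib


open Finset

namespace QIF13

/-- Prior vulnerability. -/
noncomputable def Vmax {X : Type*} [Fintype X] [Nonempty X] (π : X → ℝ) : ℝ :=
  Finset.univ.sup' Finset.univ_nonempty π

/-- Posterior vulnerability. -/
noncomputable def Vpost {X Y : Type*} [Fintype X] [Fintype Y] [Nonempty X]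
    (π : X → ℝ) (C : X → Y → ℝ) : ℝ :=
  ∑ y, Finset.univ.sup' Finset.univ_nonempty fun x => π x * C x y

/-- Min-entropy leakage (in bits). -/
noncomputable def Iinf {X Y : Type*} [Fintype X] [Fintype Y] [Nonempty X]
    (π : X → ℝ) (C : X → Y → ℝ) : ℝ :=
  Real.logb 2 (Vpost π C / Vmax π)

/-- Parallel composition with shared input. -/
noncomputable def shParC {X Y₁ Y₂ : Type*}
    (C₁ : X → Y₁ → ℝ) (C₂ : X → Y₂ → ℝ) : X → Y₁ × Y₂ → ℝ :=
  fun x q => C₁ x q.1 * C₂ x q.2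


private lemma vpos_aux {X Y : Type*} [Fintype X] [Fintype Y] [Nonempty X]
    (π : X → ℝ) (x₀ : X) (hx₀ : 0 < π x₀) (C : X → Y → ℝ)
    (hC0 : ∀ x y, 0 ≤ C x y) (hC1 : ∀ x, ∑ y, C x y = 1) : 0 < Vpost π C := by
  have : π x₀ ≤ Vpost π C := by
    calc π x₀ = ∑ y, π x₀ * C x₀ y := by rw [← Finset.mul_sum, hC1, mul_one]
      _ ≤ ∑ y, Finset.univ.sup' Finset.univ_nonempty (fun x => π x * C x y) :=
        Finset.sum_le_sum fun y _ =>
          Finset.le_sup' (fun x => π x * C x y) (Finset.mem_univ x₀)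
  linarith

private lemma key_aux {X Y₁ Y₂ : Type*} [Fintype X] [Fintype Y₁] [Fintype Y₂] [Nonempty X]
    (π : X → ℝ) (C₁ : X → Y₁ → ℝ) (C₂ : X → Y₂ → ℝ)
    (hC₂0 : ∀ x y, 0 ≤ C₂ x y) (hC₂1 : ∀ x, ∑ y, C₂ x y = 1) :
    Vpost π C₁ ≤ Vpost π (shParC C₁ C₂) := by
  unfold Vpost shParC
  rw [Fintype.sum_prod_type]
  apply Finset.sum_le_sum
  intro y₁ _
  obtain ⟨x', -, hx'⟩ := Finset.exists_mem_eq_sup' Finset.univ_nonempty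
    (fun x => π x * C₁ x y₁)
  rw [hx']
  calc π x' * C₁ x' y₁ = ∑ y₂, π x' * C₁ x' y₁ * C₂ x' y₂ := by
        rw [← Finset.mul_sum, hC₂1, mul_one]
    _ ≤ ∑ y₂, Finset.univ.sup' Finset.univ_nonempty
          (fun x => π x * (C₁ x y₁ * C₂ x y₂)) :=
        Finset.sum_le_sum fun y₂ _ => by
          have := Finset.le_sup' (fun x => π x * (C₁ x y₁ * C₂ x y₂))
            (Finset.mem_univ x')
          linarith [this, mul_assoc (π x') (C₁ x' y₁) (C₂ x' y₂)]

/-- `V(π, C₁ ∥ C₂) ≥ max{V(π,C₁), V(π,C₂)}` (i.e. `H_∞(π, C₁∥C₂) ≤ min{H_∞(π,C₁),H_∞(π,C₂)}`),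
and consequently `I_∞(π, C₁ ∥ C₂) ≥ max{I_∞(π,C₁), I_∞(π,C₂)}`. -/
theorem shared_min_entropy_lower {X Y₁ Y₂ : Type*}
    [Fintype X] [Fintype Y₁] [Fintype Y₂] [Nonempty X]
    (π : X → ℝ) (C₁ : X → Y₁ → ℝ) (C₂ : X → Y₂ → ℝ)
    (hπ0 : ∀ x, 0 ≤ π x) (hπ1 : ∑ x, π x = 1)
    (hC₁0 : ∀ x y, 0 ≤ C₁ x y) (hC₁1 : ∀ x, ∑ y, C₁ x y = 1)
    (hC₂0 : ∀ x y, 0 ≤ C₂ x y) (hC₂1 : ∀ x, ∑ y, C₂ x y = 1) :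
    max (Vpost π C₁) (Vpost π C₂) ≤ Vpost π (shParC C₁ C₂)
      ∧ max (Iinf π C₁) (Iinf π C₂) ≤ Iinf π (shParC C₁ C₂) := by
  -- an x with positive prior
  obtain ⟨x₀, hx₀⟩ : ∃ x, 0 < π x := by
    by_contra h
    push_neg at h
    have : ∑ x, π x ≤ 0 := Finset.sum_nonpos fun x _ => h x
    linarith [hπ1]
  have hVmax : 0 < Vmax π :=
    lt_of_lt_of_le hx₀ (Finset.le_sup' π (Finset.mem_univ x₀))
  have h1 : Vpost π C₁ ≤ Vpost π (shParC C₁ C₂) := key_aux π C₁ C₂ hC₂0 hC₂1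
  have h2 : Vpost π C₂ ≤ Vpost π (shParC C₁ C₂) := by
    have := key_aux π C₂ C₁ hC₁0 hC₁1
    refine this.trans (le_of_eq ?_)
    unfold Vpost shParC
    rw [← (Equiv.prodComm Y₁ Y₂).sum_comp
      (fun q => Finset.univ.sup' Finset.univ_nonempty fun x => π x * (C₂ x q.1 * C₁ x q.2))]
    exact Finset.sum_congr rfl fun q _ => Finset.sup'_congr _ rfl fun x _ => by simp only [Equiv.prodComm_apply, Prod.fst_swap, Prod.snd_swap]; ring
  have hV1 := vpos_aux π x₀ hx₀ C₁ hC₁0 hC₁1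
  have hV2 := vpos_aux π x₀ hx₀ C₂ hC₂0 hC₂1
  refine ⟨max_le h1 h2, max_le ?_ ?_⟩
  · exact Real.logb_le_logb_of_le one_lt_two (div_pos hV1 hVmax)
      (div_le_div_of_nonneg_right h1 hVmax.le)
  · exact Real.logb_le_logb_of_le one_lt_two (div_pos hV2 hVmax)
      (div_le_div_of_nonneg_right h2 hVmax.le)
end QIF13
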